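/- If (D₁, ⊣₁, ⊢₁) and (D₂, ⊣₂, ⊢₂) are doppelsemigroups such that (D₁, ⊣₁) and (D₂, ⊣₂) are null semigroups (all products equal a fixed zero), and the semigroups (D₁, ⊢₁) and (D₂, ⊢₂) are isomorphic, then the doppelsemigroups (D₁, ⊣₁, ⊢₁) and (D₂, ⊣₂, ⊢₂) are isomorphic. -/

import Mathlib

/-- A doppelsemigroup: two associative operations satisfying the interassociativity
axioms. -/
structure DoppelSG (D : Type*) where
  l : D → D → D
  r : D → D → D
  l_assoc : ∀ x y z, l (l x y) z = l x (l y z)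
  r_assoc : ∀ x y z, r (r x y) z = r x (r y z)
  d1 : ∀ x y z, r (l x y) z = l x (r y z)
  d2 : ∀ x y z, l (r x y) z = r x (l y z)

/-!
Interassociativity forces the zero of a null operation `⊣` to be a two-sided zero of `⊢`.
A `⊢`-isomorphism therefore sends `z₁` to `z₂`, so it also preserves the constant operation `⊣`.
-/

namespace DoppelSG

variable {D : Type*} (A : DoppelSG D) {z : D}

theorem r_zero_left_of_l_const (hz : ∀ x y, A.l x y = z) (w : D) : A.r z w = z := by
  simpa only [hz] using A.d1 z z w

theorem r_zero_right_of_l_const (hz : ∀ x y, A.l x y = z) (w : D) : A.r w z = z := by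
  simpa only [hz] using (A.d2 w z z).symm

end DoppelSG

theorem map_leftZero_eq_rightZero {α β : Type*} {mα : α → α → α} {mβ : β → β → β}
    {f : α → β} (hf : Function.Surjective f) (hmul : ∀ x y, f (mα x y) = mβ (f x) (f y))
    {z₁ : α} (h₁ : ∀ w, mα z₁ w = z₁) {z₂ : β} (h₂ : ∀ w, mβ w z₂ = z₂) : f z₁ = z₂ := by
  obtain ⟨w, rfl⟩ := hf z₂
  calc f z₁ = f (mα z₁ w) := by rw [h₁]
    _ = mβ (f z₁) (f w) := hmul z₁ w
    _ = f w := h₂ (f z₁)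

theorem null_doppelsemigroups_isomorphic {D₁ D₂ : Type*}
    (A : DoppelSG D₁) (B : DoppelSG D₂)
    (z₁ : D₁) (hz₁ : ∀ x y, A.l x y = z₁)
    (z₂ : D₂) (hz₂ : ∀ x y, B.l x y = z₂)
    (ψ : D₁ ≃ D₂) (hψ : ∀ x y, ψ (A.r x y) = B.r (ψ x) (ψ y)) :
    ∃ φ : D₁ ≃ D₂, (∀ x y, φ (A.l x y) = B.l (φ x) (φ y)) ∧
                   (∀ x y, φ (A.r x y) = B.r (φ x) (φ y)) := by
  have hψz : ψ z₁ = z₂ :=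
    map_leftZero_eq_rightZero ψ.surjective hψ (A.r_zero_left_of_l_const hz₁)
      (B.r_zero_right_of_l_const hz₂)
  exact ⟨ψ, fun x y => by rw [hz₁, hz₂, hψz], hψ⟩
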